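/- arXiv:1102.3402 — 2 statements merged into one kernel-verified Lean document; each statement's English description precedes it below -/
import Mathlib

section
/- Let λ and κ be Borel probability measures on ℝ without atoms, let β ∈ ℝ and n ≥ 2. Then for every k ∈ {1,…,n}, the μ_{n,λ×κ,β}-probability of the set of ((x_1,y_1),…,(x_n,y_n)) ∈ (ℝ²)ⁿ for which there exist indices i_1 < … < i_k such that (x_{i_j} − x_{i_ℓ})(y_{i_j} − y_{i_ℓ}) > 0 for all j ≠ ℓ equals μ_{n,exp(−β/(n−1))}({π ∈ S_n : ℓ(π) ≥ k}). -/
open Filter MeasureTheory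
open scoped ENNReal

/-- Number of inversions of a permutation of `Fin n`. -/
def inversions {n : ℕ} (π : Equiv.Perm (Fin n)) : ℕ :=
  (Finset.univ.filter (fun p : Fin n × Fin n => p.1 < p.2 ∧ π p.2 < π p.1)).card

/-- Length of the longest increasing subsequence of a permutation of `Fin n`. -/
def lisLength {n : ℕ} (π : Equiv.Perm (Fin n)) : ℕ :=
  Finset.univ.powerset.sup fun s : Finset (Fin n) =>
    if ∀ i ∈ s, ∀ j ∈ s, i < j → π i < π j then s.card else 0

/-- The Mallows(n,q) probability of a set of permutations. -/
noncomputable def mallowsProb (n : ℕ) (q : ℝ) (A : Set (Equiv.Perm (Fin n))) : ℝ :=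
  (∑ π : Equiv.Perm (Fin n), A.indicator (fun π => q ^ inversions π) π) /
    (∑ π : Equiv.Perm (Fin n), q ^ inversions π)

/-- Two-body interaction `h(x,y) = 1{xy < 0}`. -/
noncomputable def hInt (p : ℝ × ℝ) : ℝ := if p.1 * p.2 < 0 then 1 else 0

/-- The `n`-particle Hamiltonian `H_n = (n-1)⁻¹ Σ_{i<j} h(x_i-x_j, y_i-y_j)`. -/
noncomputable def hamiltonian (n : ℕ) (z : Fin n → ℝ × ℝ) : ℝ :=
  ((n : ℝ) - 1)⁻¹ *
    ∑ i : Fin n, ∑ j : Fin n,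
      if i < j then hInt ((z i).1 - (z j).1, (z i).2 - (z j).2) else 0

/-- Partition function of the Boltzmann–Gibbs measure. -/
noncomputable def gibbsZ (n : ℕ) (α : Measure (ℝ × ℝ)) (β : ℝ) : ℝ :=
  ∫ z, Real.exp (-β * hamiltonian n z) ∂(Measure.pi fun _ : Fin n => α)

/-- The Boltzmann–Gibbs measure `μ_{n,α,β}` on `(ℝ²)ⁿ`. -/
noncomputable def gibbs (n : ℕ) (α : Measure (ℝ × ℝ)) (β : ℝ) : Measure (Fin n → ℝ × ℝ) :=
  (Measure.pi fun _ : Fin n => α).withDensity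
    fun z => ENNReal.ofReal (Real.exp (-β * hamiltonian n z) / gibbsZ n α β)

/-!
Almost surely the points have distinct first and distinct second coordinates, so the
configuration lies in exactly one cell `rankCell σ τ`: `σ` sorts the points by their first and
`τ` by their second coordinate. On that cell the number of discordant pairs is the number of
inversions of `τ⁻¹ * σ`, so the Gibbs density is `q ^ inversions (τ⁻¹ * σ)` up to normalisation,
and `k` pairwise concordant points are exactly an increasing subsequence of length `k` of
`τ⁻¹ * σ`. Since the two coordinates are independent and each has an exchangeable law, all
`(n!)²` cells have the same mass, so `τ⁻¹ * σ` is uniform on `S_n` and the Gibbs measure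
tilts it into the Mallows measure.
-/

open Equiv Set

section Combinatorics

variable {n : ℕ} {α : Type*} [LinearOrder α]

theorem lt_iff_inv_lt_inv_of_strictMono_comp {f : Fin n → α} {σ : Perm (Fin n)}
    (hf : StrictMono (f ∘ σ)) (i j : Fin n) : f i < f j ↔ σ⁻¹ i < σ⁻¹ j := by
  simpa using hf.lt_iff_lt (a := σ⁻¹ i) (b := σ⁻¹ j)

theorem eq_sort_of_strictMono_comp {f : Fin n → α} {σ : Perm (Fin n)}
    (hf : StrictMono (f ∘ σ)) : σ = Tuple.sort f :=
  Tuple.eq_sort_iff.2 ⟨hf.monotone, fun _ _ hij h => absurd h (hf hij).ne⟩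

theorem strictMono_comp_sort {f : Fin n → α} (hf : Function.Injective f) :
    StrictMono (f ∘ Tuple.sort f) :=
  (Tuple.monotone_sort f).strictMono_of_injective (hf.comp (Tuple.sort f).injective)

theorem exists_strictMono_forall_ne_iff {k : ℕ} {r : α → α → Prop} :
    (∃ i : Fin k → α, StrictMono i ∧ ∀ j l, j ≠ l → r (i j) (i l)) ↔
      ∃ s : Finset α, s.card = k ∧ (s : Set α).Pairwise r := by
  constructor
  · rintro ⟨i, hi, hr⟩
    refine ⟨Finset.univ.image i, by simp [Finset.card_image_of_injective _ hi.injective], ?_⟩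
    rw [Finset.coe_image, Finset.coe_univ, image_univ]
    rintro _ ⟨j, rfl⟩ _ ⟨l, rfl⟩ hjl
    exact hr j l fun h => hjl (congrArg i h)
  · rintro ⟨s, hs, hr⟩
    exact ⟨s.orderEmbOfFin hs, (s.orderEmbOfFin hs).strictMono, fun j l hjl =>
      hr (s.orderEmbOfFin_mem hs j) (s.orderEmbOfFin_mem hs l)
        ((s.orderEmbOfFin hs).injective.ne hjl)⟩

theorem le_lisLength_iff {k : ℕ} {π : Perm (Fin n)} :
    k ≤ lisLength π ↔ ∃ s : Finset (Fin n), s.card = k ∧ StrictMonoOn π s := by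
  constructor
  · intro h
    obtain ⟨s, -, hs⟩ := Finset.exists_mem_eq_sup Finset.univ.powerset ⟨∅, by simp⟩
      fun s : Finset (Fin n) => if ∀ i ∈ s, ∀ j ∈ s, i < j → π i < π j then s.card else 0
    rw [lisLength, hs] at h
    split_ifs at h with hmono
    · obtain ⟨t, hts, rfl⟩ := Finset.exists_subset_card_eq h
      exact ⟨t, rfl, fun i hi j hj => hmono i (hts hi) j (hts hj)⟩
    · exact ⟨∅, by simp [Nat.le_zero.1 h], by simp [StrictMonoOn]⟩
  · rintro ⟨s, rfl, hs⟩
    refine Finset.le_sup_of_le (Finset.mem_powerset.2 (Finset.subset_univ s)) ?_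
    rw [if_pos fun i hi j hj => hs (Finset.mem_coe.2 hi) (Finset.mem_coe.2 hj)]

theorem sum_perm_pairs_inv_mul {M : Type*} [AddCommMonoid M] (φ : Perm (Fin n) → M) :
    ∑ p : Perm (Fin n) × Perm (Fin n), φ (p.2⁻¹ * p.1) = n.factorial • ∑ π, φ π := by
  rw [Fintype.sum_prod_type, Finset.sum_comm]
  have hτ : ∀ τ : Perm (Fin n), ∑ σ, φ (τ⁻¹ * σ) = ∑ π, φ π := fun τ =>
    Fintype.sum_equiv (Equiv.mulLeft τ⁻¹) _ φ fun _ => rfl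
  simp only [hτ]
  rw [Finset.sum_const, Finset.card_univ, Fintype.card_perm, Fintype.card_fin]

end Combinatorics

section SymmetricSum

variable {ι : Type*} [Fintype ι] [LinearOrder ι]

theorem two_mul_sum_ite_lt (F : ι → ι → ℝ) (hF : ∀ i j, F i j = F j i) :
    2 * ∑ i, ∑ j, (if i < j then F i j else 0) = ∑ i, ∑ j, (if i ≠ j then F i j else 0) := by
  have hswap : ∑ i, ∑ j, (if j < i then F i j else 0) = ∑ i, ∑ j, (if i < j then F i j else 0) := by
    rw [Finset.sum_comm]
    simp_rw [hF]
  rw [two_mul]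
  nth_rw 2 [← hswap]
  rw [← Finset.sum_add_distrib]
  refine Finset.sum_congr rfl fun i _ => ?_
  rw [← Finset.sum_add_distrib]
  refine Finset.sum_congr rfl fun j _ => ?_
  rcases lt_trichotomy i j with h | rfl | h
  · simp [h, h.ne, h.not_gt]
  · simp
  · simp [h, h.ne', h.not_gt]

theorem sum_ite_lt_comp_perm (F : ι → ι → ℝ) (hF : ∀ i j, F i j = F j i) (σ : Perm ι) :
    ∑ i, ∑ j, (if i < j then F (σ i) (σ j) else 0) = ∑ i, ∑ j, (if i < j then F i j else 0) := by
  have hne : ∑ i, ∑ j, (if i ≠ j then F (σ i) (σ j) else 0)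
      = ∑ i, ∑ j, (if i ≠ j then F i j else 0) := by
    refine Fintype.sum_equiv σ _ _ fun i => Fintype.sum_equiv σ _ _ fun j => ?_
    simp only [σ.injective.ne_iff]
  have h₁ := two_mul_sum_ite_lt (fun i j => F (σ i) (σ j)) fun i j => hF _ _
  have h₂ := two_mul_sum_ite_lt F hF
  linarith

end SymmetricSum

section RankCell

variable {n : ℕ}

/-- On this cell `τ⁻¹ * σ` sends the rank of each point among the first coordinates to its rank
among the second coordinates. -/
def rankCell (σ τ : Perm (Fin n)) : Set (Fin n → ℝ × ℝ) :=
  {z | StrictMono (Prod.fst ∘ z ∘ σ) ∧ StrictMono (Prod.snd ∘ z ∘ τ)}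

variable {z : Fin n → ℝ × ℝ} {σ τ : Perm (Fin n)}

theorem measurableSet_rankCell (σ τ : Perm (Fin n)) : MeasurableSet (rankCell σ τ) := by
  simp only [rankCell, StrictMono, Function.comp]
  measurability

theorem snd_lt_snd_iff_of_mem_rankCell (hz : z ∈ rankCell σ τ) (a b : Fin n) :
    (z (σ a)).2 < (z (σ b)).2 ↔ (τ⁻¹ * σ) a < (τ⁻¹ * σ) b :=
  lt_iff_inv_lt_inv_of_strictMono_comp (f := Prod.snd ∘ z) hz.2 _ _

theorem mul_sub_pos_iff_of_mem_rankCell (hz : z ∈ rankCell σ τ) {a b : Fin n} (hab : a < b) :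
    0 < ((z (σ a)).1 - (z (σ b)).1) * ((z (σ a)).2 - (z (σ b)).2) ↔
      (τ⁻¹ * σ) a < (τ⁻¹ * σ) b := by
  have hx : (z (σ a)).1 - (z (σ b)).1 < 0 := sub_neg.2 (hz.1 hab)
  rw [← smul_eq_mul, smul_pos_iff_of_neg_left hx, sub_neg, snd_lt_snd_iff_of_mem_rankCell hz]

theorem mul_sub_neg_iff_of_mem_rankCell (hz : z ∈ rankCell σ τ) {a b : Fin n} (hab : a < b) :
    ((z (σ a)).1 - (z (σ b)).1) * ((z (σ a)).2 - (z (σ b)).2) < 0 ↔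
      (τ⁻¹ * σ) b < (τ⁻¹ * σ) a := by
  have hx : (z (σ a)).1 - (z (σ b)).1 < 0 := sub_neg.2 (hz.1 hab)
  rw [← smul_eq_mul, smul_neg_iff_of_neg_left hx, sub_pos, snd_lt_snd_iff_of_mem_rankCell hz]

theorem eq_of_mem_rankCell {σ' τ' : Perm (Fin n)} (hz : z ∈ rankCell σ τ)
    (hz' : z ∈ rankCell σ' τ') : σ = σ' ∧ τ = τ' :=
  ⟨(eq_sort_of_strictMono_comp (f := Prod.fst ∘ z) hz.1).trans
      (eq_sort_of_strictMono_comp (f := Prod.fst ∘ z) hz'.1).symm,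
    (eq_sort_of_strictMono_comp (f := Prod.snd ∘ z) hz.2).trans
      (eq_sort_of_strictMono_comp (f := Prod.snd ∘ z) hz'.2).symm⟩

theorem exists_mem_rankCell (hx : Function.Injective (Prod.fst ∘ z))
    (hy : Function.Injective (Prod.snd ∘ z)) : ∃ σ τ : Perm (Fin n), z ∈ rankCell σ τ :=
  ⟨_, _, strictMono_comp_sort hx, strictMono_comp_sort hy⟩

theorem hamiltonian_eq_of_mem_rankCell (hz : z ∈ rankCell σ τ) :
    hamiltonian n z = ((n : ℝ) - 1)⁻¹ * inversions (τ⁻¹ * σ) := by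
  have hsymm : ∀ i j, hInt ((z i).1 - (z j).1, (z i).2 - (z j).2)
      = hInt ((z j).1 - (z i).1, (z j).2 - (z i).2) := fun i j => by
    simp only [hInt]
    rw [← neg_sub (z j).1, ← neg_sub (z j).2, neg_mul_neg]
  rw [hamiltonian, ← sum_ite_lt_comp_perm _ hsymm σ, inversions, Finset.card_filter,
    Fintype.sum_prod_type]
  push_cast
  refine congrArg _ (Finset.sum_congr rfl fun a _ => Finset.sum_congr rfl fun b _ => ?_)
  by_cases hab : a < b
  · simp [hab, hInt, mul_sub_neg_iff_of_mem_rankCell hz hab]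
  · simp [hab]

theorem pairwise_concordant_iff_of_mem_rankCell (hz : z ∈ rankCell σ τ) (t : Finset (Fin n)) :
    (t.map σ.toEmbedding : Set (Fin n)).Pairwise
        (fun i j => 0 < ((z i).1 - (z j).1) * ((z i).2 - (z j).2)) ↔
      StrictMonoOn (τ⁻¹ * σ) t := by
  rw [Finset.coe_map, Equiv.coe_toEmbedding, InjOn.pairwise_image σ.injective.injOn]
  constructor
  · exact fun h a ha b hb hab => (mul_sub_pos_iff_of_mem_rankCell hz hab).1 (h ha hb hab.ne)
  · intro h a ha b hb hab
    rcases hab.lt_or_gt with hab | hba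
    · exact (mul_sub_pos_iff_of_mem_rankCell hz hab).2 (h ha hb hab)
    · rw [Function.onFun, show ((z (σ a)).1 - (z (σ b)).1) * ((z (σ a)).2 - (z (σ b)).2)
        = ((z (σ b)).1 - (z (σ a)).1) * ((z (σ b)).2 - (z (σ a)).2) by ring]
      exact (mul_sub_pos_iff_of_mem_rankCell hz hba).2 (h hb ha hba)

theorem exists_concordant_iff_of_mem_rankCell (hz : z ∈ rankCell σ τ) (k : ℕ) :
    (∃ i : Fin k → Fin n, StrictMono i ∧ ∀ j l : Fin k, j ≠ l →
        0 < ((z (i j)).1 - (z (i l)).1) * ((z (i j)).2 - (z (i l)).2)) ↔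
      k ≤ lisLength (τ⁻¹ * σ) := by
  rw [exists_strictMono_forall_ne_iff
    (r := fun i j => 0 < ((z i).1 - (z j).1) * ((z i).2 - (z j).2)), le_lisLength_iff]
  constructor
  · rintro ⟨s, rfl, hs⟩
    refine ⟨s.map σ.symm.toEmbedding, Finset.card_map _, ?_⟩
    rw [← pairwise_concordant_iff_of_mem_rankCell hz, Finset.map_map]
    simpa using hs
  · rintro ⟨t, rfl, ht⟩
    exact ⟨t.map σ.toEmbedding, Finset.card_map _,
      (pairwise_concordant_iff_of_mem_rankCell hz t).2 ht⟩

end RankCell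

theorem ae_apply_ne_apply_of_measure_preimage_singleton {α β : Type*} [MeasurableSpace α]
    [MeasurableSpace β] [MeasurableEq β] {μ : Measure α} [SigmaFinite μ] {f : α → β}
    (hf : Measurable f) (hμf : ∀ b, μ (f ⁻¹' {b}) = 0) {n : ℕ} {i j : Fin n} (hij : i ≠ j) :
    ∀ᵐ u ∂Measure.pi (fun _ : Fin n => μ), f (u i) ≠ f (u j) := by
  obtain ⟨m, rfl⟩ : ∃ m, n = m + 1 := Nat.exists_eq_succ_of_ne_zero i.pos.ne'
  obtain ⟨j, rfl⟩ := Fin.exists_succAbove_eq hij.symm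
  have hS : MeasurableSet {p : α × (Fin m → α) | f p.1 = f (p.2 j)} :=
    measurableSet_eq_fun (hf.comp measurable_fst)
      (hf.comp ((measurable_pi_apply j).comp measurable_snd))
  have hprod : ∀ᵐ p ∂μ.prod (Measure.pi fun _ : Fin m => μ), f p.1 ≠ f (p.2 j) := by
    rw [ae_iff]
    simp only [not_not]
    rw [Measure.prod_apply_symm hS]
    exact (lintegral_congr fun v : Fin m → α => hμf (f (v j))).trans lintegral_zero
  filter_upwards [(measurePreserving_piFinSuccAbove (fun _ => μ) i).quasiMeasurePreserving.ae
    hprod] with u hu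
  exact hu

section ProductMeasure

variable {n : ℕ} {lam kap : Measure ℝ}

theorem ae_exists_mem_rankCell [SigmaFinite lam] [SigmaFinite kap] (hlam : ∀ x, lam {x} = 0)
    (hkap : ∀ y, kap {y} = 0) :
    ∀ᵐ z ∂Measure.pi (fun _ : Fin n => lam.prod kap), ∃ σ τ : Perm (Fin n), z ∈ rankCell σ τ := by
  have hfst : ∀ x, lam.prod kap (Prod.fst ⁻¹' {x}) = 0 := fun x => by
    rw [← prod_univ, Measure.prod_prod, hlam, zero_mul]
  have hsnd : ∀ y, lam.prod kap (Prod.snd ⁻¹' {y}) = 0 := fun y => by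
    rw [← univ_prod, Measure.prod_prod, hkap, mul_zero]
  have hdistinct : ∀ᵐ z ∂Measure.pi (fun _ : Fin n => lam.prod kap),
      ∀ i j, i ≠ j → (z i).1 ≠ (z j).1 ∧ (z i).2 ≠ (z j).2 := by
    refine ae_all_iff.2 fun i => ae_all_iff.2 fun j => ?_
    by_cases hij : i = j
    · exact Eventually.of_forall fun _ h => absurd hij h
    · filter_upwards [ae_apply_ne_apply_of_measure_preimage_singleton measurable_fst hfst hij,
        ae_apply_ne_apply_of_measure_preimage_singleton measurable_snd hsnd hij]
        with z h₁ h₂ _ using ⟨h₁, h₂⟩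
  filter_upwards [hdistinct] with z hz
  exact exists_mem_rankCell (fun i j h => by_contra fun hij => (hz i j hij).1 h)
    (fun i j h => by_contra fun hij => (hz i j hij).2 h)

theorem measurableSet_setOf_strictMono_comp (σ : Perm (Fin n)) :
    MeasurableSet {u : Fin n → ℝ | StrictMono (u ∘ σ)} := by
  simp only [StrictMono, Function.comp]
  measurability

theorem pi_setOf_strictMono_comp (μ : Measure ℝ) [SigmaFinite μ] (σ : Perm (Fin n)) :
    Measure.pi (fun _ : Fin n => μ) {u | StrictMono (u ∘ σ)} =
      Measure.pi (fun _ : Fin n => μ) {u | StrictMono u} := by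
  rw [← (measurePreserving_piCongrLeft (fun _ : Fin n => μ) σ).measure_preimage
    (measurableSet_setOf_strictMono_comp σ).nullMeasurableSet]
  congr with u
  simp [Function.comp_def, MeasurableEquiv.piCongrLeft_apply_apply]

theorem measure_rankCell_eq_mul [SigmaFinite lam] [SigmaFinite kap] (σ τ : Perm (Fin n)) :
    Measure.pi (fun _ : Fin n => lam.prod kap) (rankCell σ τ) =
      Measure.pi (fun _ => lam) {u | StrictMono (u ∘ σ)} *
        Measure.pi (fun _ => kap) {v | StrictMono (v ∘ τ)} := by
  rw [show rankCell σ τ = MeasurableEquiv.arrowProdEquivProdArrow ℝ ℝ (Fin n) ⁻¹'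
      ({u | StrictMono (u ∘ σ)} ×ˢ {v | StrictMono (v ∘ τ)}) from rfl,
    (measurePreserving_arrowProdEquivProdArrow ℝ ℝ (Fin n) _ _).measure_preimage
      ((measurableSet_setOf_strictMono_comp σ).prod
        (measurableSet_setOf_strictMono_comp τ)).nullMeasurableSet, Measure.prod_prod]

theorem measure_rankCell [IsProbabilityMeasure lam] [IsProbabilityMeasure kap]
    (hlam : ∀ x, lam {x} = 0) (hkap : ∀ y, kap {y} = 0) (σ τ : Perm (Fin n)) :
    Measure.pi (fun _ : Fin n => lam.prod kap) (rankCell σ τ) =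
      ((n.factorial ^ 2 : ℕ) : ℝ≥0∞)⁻¹ := by
  set Λ := Measure.pi fun _ : Fin n => lam.prod kap
  have hcell : ∀ p : Perm (Fin n) × Perm (Fin n),
      Λ (rankCell p.1 p.2) = Λ (rankCell 1 1) := fun p => by
    simp only [Λ, measure_rankCell_eq_mul, pi_setOf_strictMono_comp]
  have hunion : Λ (⋃ p : Perm (Fin n) × Perm (Fin n), rankCell p.1 p.2) = 1 := by
    refine (prob_compl_eq_zero_iff (.iUnion fun p : Perm (Fin n) × Perm (Fin n) =>
      measurableSet_rankCell p.1 p.2)).1 ?_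
    refine measure_mono_null (fun z hz => ?_) (ae_iff.1 (ae_exists_mem_rankCell hlam hkap))
    simpa using hz
  rw [measure_iUnion (fun p q hpq => disjoint_left.2 fun z hp hq =>
      hpq (Prod.ext_iff.2 (eq_of_mem_rankCell hp hq)))
    (fun p => measurableSet_rankCell p.1 p.2), tsum_fintype] at hunion
  simp only [hcell, Finset.sum_const, Finset.card_univ, Fintype.card_prod, Fintype.card_perm,
    Fintype.card_fin, nsmul_eq_mul] at hunion
  rw [hcell (σ, τ)]
  exact ENNReal.eq_inv_of_mul_eq_one_left (by rw [mul_comm, sq]; exact_mod_cast hunion)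

end ProductMeasure

section Gibbs

variable {n : ℕ} {lam kap : Measure ℝ}

theorem ae_eq_sum_indicator_of_rankCell {M : Type*} [AddCommMonoid M]
    {μ : Measure (Fin n → ℝ × ℝ)} (hμ : ∀ᵐ z ∂μ, ∃ σ τ : Perm (Fin n), z ∈ rankCell σ τ)
    {F : (Fin n → ℝ × ℝ) → M} {φ : Perm (Fin n) → M}
    (hF : ∀ σ τ, ∀ z ∈ rankCell σ τ, F z = φ (τ⁻¹ * σ)) :
    F =ᵐ[μ] fun z => ∑ p : Perm (Fin n) × Perm (Fin n),
      (rankCell p.1 p.2).indicator (fun _ => φ (p.2⁻¹ * p.1)) z := by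
  filter_upwards [hμ] with z ⟨σ, τ, hz⟩
  rw [Finset.sum_eq_single (σ, τ), indicator_of_mem hz, hF σ τ z hz]
  · rintro p - hne
    exact indicator_of_notMem (fun hz' => hne (Prod.ext_iff.2 (eq_of_mem_rankCell hz' hz))) _
  · simp

theorem gibbs_apply_eq_ofReal_integral {α : Measure (ℝ × ℝ)} [SigmaFinite α] (β : ℝ)
    {A : Set (Fin n → ℝ × ℝ)} (hA : MeasurableSet A)
    (hint : Integrable (A.indicator fun z => Real.exp (-β * hamiltonian n z) / gibbsZ n α β)
      (Measure.pi fun _ => α)) :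
    gibbs n α β A = ENNReal.ofReal
      (∫ z, A.indicator (fun z => Real.exp (-β * hamiltonian n z) / gibbsZ n α β) z
        ∂Measure.pi fun _ => α) := by
  have hZ : 0 ≤ gibbsZ n α β := integral_nonneg fun z => (Real.exp_pos _).le
  rw [gibbs, withDensity_apply _ hA, ← lintegral_indicator hA,
    ofReal_integral_eq_lintegral_ofReal hint
      (ae_of_all _ fun z => indicator_nonneg (fun z _ => by positivity) z)]
  exact congrArg _ (indicator_comp_of_zero ENNReal.ofReal_zero)

variable [IsProbabilityMeasure lam] [IsProbabilityMeasure kap] {F : (Fin n → ℝ × ℝ) → ℝ}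
  {φ : Perm (Fin n) → ℝ}

theorem integrable_of_rankCell (hlam : ∀ x, lam {x} = 0) (hkap : ∀ y, kap {y} = 0)
    (hF : ∀ σ τ, ∀ z ∈ rankCell σ τ, F z = φ (τ⁻¹ * σ)) :
    Integrable F (Measure.pi fun _ : Fin n => lam.prod kap) :=
  (integrable_finsetSum _ fun p _ =>
    (integrable_const _).indicator (measurableSet_rankCell p.1 p.2)).congr
    (ae_eq_sum_indicator_of_rankCell (ae_exists_mem_rankCell hlam hkap) hF).symm

theorem integral_eq_of_rankCell (hlam : ∀ x, lam {x} = 0) (hkap : ∀ y, kap {y} = 0)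
    (hF : ∀ σ τ, ∀ z ∈ rankCell σ τ, F z = φ (τ⁻¹ * σ)) :
    ∫ z, F z ∂Measure.pi (fun _ : Fin n => lam.prod kap) =
      (n.factorial : ℝ)⁻¹ * ∑ π, φ π := by
  rw [integral_congr_ae (ae_eq_sum_indicator_of_rankCell (ae_exists_mem_rankCell hlam hkap) hF),
    integral_finsetSum _ fun p _ =>
      (integrable_const _).indicator (measurableSet_rankCell p.1 p.2)]
  simp only [integral_indicator_const _ (measurableSet_rankCell _ _), measureReal_def,
    measure_rankCell hlam hkap, smul_eq_mul]
  rw [← Finset.mul_sum, sum_perm_pairs_inv_mul, nsmul_eq_mul, ENNReal.toReal_inv,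
    ENNReal.toReal_natCast]
  have hn : (n.factorial : ℝ) ≠ 0 := by positivity
  push_cast
  field_simp

theorem gibbs_eq_mallowsProb_of_rankCell (hlam : ∀ x, lam {x} = 0) (hkap : ∀ y, kap {y} = 0)
    (β : ℝ) {A : Set (Fin n → ℝ × ℝ)} (hA : MeasurableSet A) {B : Set (Perm (Fin n))}
    (hAB : ∀ σ τ, ∀ z ∈ rankCell σ τ, z ∈ A ↔ τ⁻¹ * σ ∈ B) :
    gibbs n (lam.prod kap) β A =
      ENNReal.ofReal (mallowsProb n (Real.exp (-β / ((n : ℝ) - 1))) B) := by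
  set q := Real.exp (-β / ((n : ℝ) - 1))
  have hweight : ∀ σ τ, ∀ z ∈ rankCell σ τ,
      Real.exp (-β * hamiltonian n z) = q ^ inversions (τ⁻¹ * σ) := fun σ τ z hz => by
    rw [hamiltonian_eq_of_mem_rankCell hz, ← Real.exp_nat_mul]
    ring_nf
  have hZ : gibbsZ n (lam.prod kap) β = (n.factorial : ℝ)⁻¹ * ∑ π, q ^ inversions π :=
    integral_eq_of_rankCell hlam hkap hweight
  have hdensity : ∀ σ τ, ∀ z ∈ rankCell σ τ,
      A.indicator (fun z => Real.exp (-β * hamiltonian n z) / gibbsZ n (lam.prod kap) β) z =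
        B.indicator (fun π => q ^ inversions π / gibbsZ n (lam.prod kap) β) (τ⁻¹ * σ) := by
    intro σ τ z hz
    by_cases hB : τ⁻¹ * σ ∈ B
    · rw [indicator_of_mem ((hAB σ τ z hz).2 hB), indicator_of_mem hB, hweight σ τ z hz]
    · rw [indicator_of_notMem (mt (hAB σ τ z hz).1 hB), indicator_of_notMem hB]
  rw [gibbs_apply_eq_ofReal_integral β hA (integrable_of_rankCell hlam hkap hdensity),
    integral_eq_of_rankCell hlam hkap hdensity, mallowsProb, hZ]
  have hS : 0 < ∑ π : Perm (Fin n), q ^ inversions π :=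
    Finset.sum_pos (fun π _ => pow_pos (Real.exp_pos _) _) Finset.univ_nonempty
  have hn : (n.factorial : ℝ) ≠ 0 := by positivity
  simp_rw [div_eq_mul_inv, indicator_mul_const, ← Finset.sum_mul]
  field_simp

end Gibbs

theorem gibbs_record_eq_mallows_lis_general (lam kap : Measure ℝ)
    (hlamP : IsProbabilityMeasure lam) (hkapP : IsProbabilityMeasure kap)
    (hlam : ∀ x : ℝ, lam {x} = 0) (hkap : ∀ y : ℝ, kap {y} = 0)
    (β : ℝ) (n : ℕ) (k : ℕ) :
    gibbs n (lam.prod kap) β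
        {z : Fin n → ℝ × ℝ | ∃ i : Fin k → Fin n, StrictMono i ∧
          ∀ j l : Fin k, j ≠ l →
            0 < ((z (i j)).1 - (z (i l)).1) * ((z (i j)).2 - (z (i l)).2)}
      = ENNReal.ofReal
          (mallowsProb n (Real.exp (-β / ((n : ℝ) - 1))) {π | k ≤ lisLength π}) := by
  refine gibbs_eq_mallowsProb_of_rankCell hlam hkap β ?_
    fun σ τ z hz => exists_concordant_iff_of_mem_rankCell hz k
  measurability

/-- The Boltzmann–Gibbs probability that the configuration contains `k` points forming an
"increasing subsequence" equals the Mallows(n, e^{-β/(n-1)}) probability that the longest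
increasing subsequence has length at least `k`. -/
theorem gibbs_record_eq_mallows_lis (lam kap : Measure ℝ)
    (hlamP : IsProbabilityMeasure lam) (hkapP : IsProbabilityMeasure kap)
    (hlam : ∀ x : ℝ, lam {x} = 0) (hkap : ∀ y : ℝ, kap {y} = 0)
    (β : ℝ) (n : ℕ) (hn : 2 ≤ n) (k : ℕ) (hk1 : 1 ≤ k) (hkn : k ≤ n) :
    gibbs n (lam.prod kap) β
        {z : Fin n → ℝ × ℝ | ∃ i : Fin k → Fin n, StrictMono i ∧
          ∀ j l : Fin k, j ≠ l →
            0 < ((z (i j)).1 - (z (i l)).1) * ((z (i j)).2 - (z (i l)).2)}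
      = ENNReal.ofReal
          (mallowsProb n (Real.exp (-β / ((n : ℝ) - 1))) {π | k ≤ lisLength π}) :=
  gibbs_record_eq_mallows_lis_general lam kap hlamP hkapP hlam hkap β n k
end

section
/- Let u and v be nonnegative continuous functions on the box [a_1,a_2]×[b_1,b_2] and let P ∈ Π_n be any monotone partition of the box. Then |J̃(u,P) − J̃(v,P)| ≤ ‖u − v‖^{1/2} (a_2 − a_1 + b_2 − b_1), where ‖·‖ denotes the supremum norm on the box. -/
open MeasureTheory

/-- A monotone partition `P ∈ Π_n` of the box `[a1,a2]×[b1,b2]`: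
`a1 = x_0 ≤ … ≤ x_n = a2` and `b1 = y_0 ≤ … ≤ y_n = b2`. -/
def IsPartition (a1 a2 b1 b2 : ℝ) (n : ℕ) (x y : Fin (n + 1) → ℝ) : Prop :=
  Monotone x ∧ Monotone y ∧ x 0 = a1 ∧ y 0 = b1 ∧ x (Fin.last n) = a2 ∧ y (Fin.last n) = b2

/-- `J̃(u,P) = 2 Σ_k (∫_{x_k}^{x_{k+1}} ∫_{y_k}^{y_{k+1}} u(x,y) dx dy)^{1/2}`. -/
noncomputable def Jpart (u : ℝ × ℝ → ℝ) (n : ℕ) (x y : Fin (n + 1) → ℝ) : ℝ :=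
  2 * ∑ k : Fin n,
    Real.sqrt (∫ s in (x k.castSucc)..(x k.succ), ∫ t in (y k.castSucc)..(y k.succ), u (s, t))

/-!
On each cell `[x_k, x_{k+1}] × [y_k, y_{k+1}]` of the partition, the two double integrals differ
by at most `‖u - v‖ Δx_k Δy_k`. Since `|√A - √B| ≤ √|A - B|` and `√(Δx Δy) ≤ (Δx + Δy) / 2`,
the `k`-th terms of `J̃(u,P)` and `J̃(v,P)` differ by at most `‖u - v‖^{1/2} (Δx_k + Δy_k)`,
and the increments `Δx_k + Δy_k` telescope to `a₂ - a₁ + b₂ - b₁`.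
-/

open Set intervalIntegral
open scoped Interval

theorem Real.abs_sqrt_sub_sqrt_le (a b : ℝ) : |√a - √b| ≤ √|a - b| := by
  wlog hba : b ≤ a generalizing a b
  · rw [abs_sub_comm, abs_sub_comm a b]
    exact this b a (le_of_not_ge hba)
  have hsqrt : √a ≤ √(a - b) + √b := by
    rcases le_total b 0 with hb | hb
    · exact (Real.sqrt_le_sqrt (by linarith)).trans (le_add_of_nonneg_right (Real.sqrt_nonneg b))
    · refine Real.sqrt_le_iff.2 ⟨by positivity, ?_⟩
      nlinarith [Real.sq_sqrt hb, Real.sq_sqrt (sub_nonneg.2 hba),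
        mul_nonneg (Real.sqrt_nonneg b) (Real.sqrt_nonneg (a - b))]
  rw [abs_of_nonneg (sub_nonneg.2 (Real.sqrt_le_sqrt hba)), abs_of_nonneg (sub_nonneg.2 hba)]
  linarith

theorem Real.sqrt_mul_le_add_div_two {p q : ℝ} (hp : 0 ≤ p) (hq : 0 ≤ q) :
    √(p * q) ≤ (p + q) / 2 := by
  have := two_mul_le_add_sq (√p) (√q)
  rw [Real.sq_sqrt hp, Real.sq_sqrt hq] at this
  rw [Real.sqrt_mul hp]
  linarith

theorem Fin.sum_univ_succ_sub_castSucc {G : Type*} [AddCommGroup G] (n : ℕ)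
    (z : Fin (n + 1) → G) :
    ∑ k : Fin n, (z k.succ - z k.castSucc) = z (Fin.last n) - z 0 := by
  induction n with
  | zero => simp
  | succ n ih =>
    have h := ih (z ∘ Fin.castSucc)
    simp only [Function.comp_apply] at h
    simp only [Fin.sum_univ_castSucc, Fin.succ_castSucc, h]
    simp

theorem ContinuousOn.exists_continuous_eqOn {X : Type*} [TopologicalSpace X] [NormalSpace X]
    {s : Set X} (hs : IsClosed s) {f : X → ℝ} (hf : ContinuousOn f s) :
    ∃ g : X → ℝ, Continuous g ∧ EqOn g f s := by
  obtain ⟨g, hg⟩ := ContinuousMap.exists_restrict_eq hs ⟨_, hf.domRestrict⟩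
  exact ⟨g, g.continuous, fun p hp => congr($hg ⟨p, hp⟩)⟩

section IteratedIntegral

variable {f g : ℝ × ℝ → ℝ} {a b c d : ℝ}

theorem intervalIntegral_intervalIntegral_sub
    (hf : ContinuousOn f ([[a, b]] ×ˢ [[c, d]])) (hg : ContinuousOn g ([[a, b]] ×ˢ [[c, d]])) :
    ∫ s in a..b, ∫ t in c..d, (f (s, t) - g (s, t)) =
      (∫ s in a..b, ∫ t in c..d, f (s, t)) - ∫ s in a..b, ∫ t in c..d, g (s, t) := by
  have hR : IsClosed ([[a, b]] ×ˢ [[c, d]]) := isClosed_Icc.prod isClosed_Icc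
  obtain ⟨F, hF, hFf⟩ := hf.exists_continuous_eqOn hR
  obtain ⟨G, hG, hGg⟩ := hg.exists_continuous_eqOn hR
  have hcongr : ∀ {h H : ℝ × ℝ → ℝ}, EqOn h H ([[a, b]] ×ˢ [[c, d]]) →
      ∫ s in a..b, ∫ t in c..d, h (s, t) = ∫ s in a..b, ∫ t in c..d, H (s, t) :=
    fun hH => integral_congr fun s hs => integral_congr fun t ht => hH ⟨hs, ht⟩
  have hinner : ∀ H : ℝ × ℝ → ℝ, Continuous H → Continuous fun s => ∫ t in c..d, H (s, t) :=
    fun H hH => continuous_parametric_intervalIntegral_of_continuous' (by fun_prop) c d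
  calc ∫ s in a..b, ∫ t in c..d, (f (s, t) - g (s, t))
      = ∫ s in a..b, ∫ t in c..d, (F (s, t) - G (s, t)) :=
        hcongr (h := fun p => f p - g p) (H := fun p => F p - G p) fun p hp => by
          simp only [hFf hp, hGg hp]
    _ = (∫ s in a..b, ∫ t in c..d, F (s, t)) - ∫ s in a..b, ∫ t in c..d, G (s, t) := by
        rw [← integral_sub ((hinner F hF).intervalIntegrable a b)
          ((hinner G hG).intervalIntegrable a b)]
        exact integral_congr fun s _ =>
          integral_sub ((by fun_prop : Continuous fun t => F (s, t)).intervalIntegrable _ _)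
            ((by fun_prop : Continuous fun t => G (s, t)).intervalIntegrable _ _)
    _ = _ := by rw [hcongr hFf, hcongr hGg]

theorem abs_intervalIntegral_intervalIntegral_le {M : ℝ}
    (hM : ∀ p ∈ [[a, b]] ×ˢ [[c, d]], |f p| ≤ M) :
    |∫ s in a..b, ∫ t in c..d, f (s, t)| ≤ M * |d - c| * |b - a| := by
  simp only [← Real.norm_eq_abs] at hM ⊢
  refine norm_integral_le_of_norm_le_const fun s hs => ?_
  exact norm_integral_le_of_norm_le_const fun t ht =>
    hM (s, t) ⟨uIoc_subset_uIcc hs, uIoc_subset_uIcc ht⟩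

end IteratedIntegral

theorem abs_sqrt_integral_sub_sqrt_integral_le {u v : ℝ × ℝ → ℝ} {a b c d M : ℝ}
    (hab : a ≤ b) (hcd : c ≤ d)
    (hu : ContinuousOn u (Icc a b ×ˢ Icc c d)) (hv : ContinuousOn v (Icc a b ×ˢ Icc c d))
    (huv : ∀ p ∈ Icc a b ×ˢ Icc c d, |u p - v p| ≤ M) :
    |√(∫ s in a..b, ∫ t in c..d, u (s, t)) - √(∫ s in a..b, ∫ t in c..d, v (s, t))| ≤
      √M * ((b - a) + (d - c)) / 2 := by
  rw [← uIcc_of_le hab, ← uIcc_of_le hcd] at hu hv huv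
  have hM : 0 ≤ M := (abs_nonneg _).trans (huv (a, c) ⟨left_mem_uIcc, left_mem_uIcc⟩)
  have hdiff := abs_intervalIntegral_intervalIntegral_le (f := u - v) huv
  rw [Pi.sub_def] at hdiff
  rw [intervalIntegral_intervalIntegral_sub hu hv, abs_of_nonneg (sub_nonneg.2 hab),
    abs_of_nonneg (sub_nonneg.2 hcd)] at hdiff
  calc _ ≤ √|(∫ s in a..b, ∫ t in c..d, u (s, t)) - ∫ s in a..b, ∫ t in c..d, v (s, t)| :=
        Real.abs_sqrt_sub_sqrt_le _ _
    _ ≤ √(M * ((d - c) * (b - a))) := Real.sqrt_le_sqrt (by linarith)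
    _ = √M * √((b - a) * (d - c)) := by rw [Real.sqrt_mul hM, mul_comm (d - c)]
    _ ≤ √M * ((b - a) + (d - c)) / 2 := by
        rw [mul_div_assoc]
        gcongr
        exact Real.sqrt_mul_le_add_div_two (sub_nonneg.2 hab) (sub_nonneg.2 hcd)

theorem Jpart_continuity_general (a1 a2 b1 b2 : ℝ)
    (u v : ℝ × ℝ → ℝ)
    (hu : ContinuousOn u (Set.Icc (a1, b1) (a2, b2)))
    (hv : ContinuousOn v (Set.Icc (a1, b1) (a2, b2)))
    (n : ℕ) (x y : Fin (n + 1) → ℝ) (hP : IsPartition a1 a2 b1 b2 n x y) :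
    |Jpart u n x y - Jpart v n x y| ≤
      Real.sqrt (sSup ((fun p => |u p - v p|) '' Set.Icc (a1, b1) (a2, b2))) *
        (a2 - a1 + b2 - b1) := by
  obtain ⟨hx, hy, hx0, hy0, hxl, hyl⟩ := hP
  set M := sSup ((fun p => |u p - v p|) '' Icc (a1, b1) (a2, b2))
  have hbdd : BddAbove ((fun p => |u p - v p|) '' Icc (a1, b1) (a2, b2)) :=
    (isCompact_Icc.image_of_continuousOn (hu.sub hv).abs).bddAbove
  have hcell (k : Fin n) :
      Icc (x k.castSucc) (x k.succ) ×ˢ Icc (y k.castSucc) (y k.succ) ⊆ Icc (a1, b1) (a2, b2) := by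
    rw [Icc_prod_Icc, ← hx0, ← hy0, ← hxl, ← hyl]
    exact Icc_subset_Icc ⟨hx (Fin.zero_le _), hy (Fin.zero_le _)⟩
      ⟨hx (Fin.le_last _), hy (Fin.le_last _)⟩
  have hterm (k : Fin n) :=
    abs_sqrt_integral_sub_sqrt_integral_le (hx k.castSucc_le_succ) (hy k.castSucc_le_succ)
      (hu.mono (hcell k)) (hv.mono (hcell k))
      (M := M) fun p hp => le_csSup hbdd ⟨p, hcell k hp, rfl⟩
  rw [Jpart, Jpart, ← mul_sub, ← Finset.sum_sub_distrib, abs_mul, abs_two]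
  calc 2 * |∑ k : Fin n, _| ≤ 2 * ∑ k : Fin n,
        √M * ((x k.succ - x k.castSucc) + (y k.succ - y k.castSucc)) / 2 := by
        gcongr
        exact (Finset.abs_sum_le_sum_abs _ _).trans (Finset.sum_le_sum fun k _ => hterm k)
    _ = √M * (a2 - a1 + b2 - b1) := by
        rw [← Finset.sum_div, ← Finset.mul_sum, Finset.sum_add_distrib,
          Fin.sum_univ_succ_sub_castSucc, Fin.sum_univ_succ_sub_castSucc, hx0, hy0, hxl, hyl]
        ring

/-- Continuity estimate: `|J̃(u,P) - J̃(v,P)| ≤ ‖u-v‖^{1/2} (a2-a1+b2-b1)`, where `‖·‖` is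
the supremum norm on the box. -/
theorem Jpart_continuity (a1 a2 b1 b2 : ℝ) (ha : a1 ≤ a2) (hb : b1 ≤ b2)
    (u v : ℝ × ℝ → ℝ)
    (hu : ContinuousOn u (Set.Icc (a1, b1) (a2, b2)))
    (hv : ContinuousOn v (Set.Icc (a1, b1) (a2, b2)))
    (hu0 : ∀ p ∈ Set.Icc (a1, b1) (a2, b2), 0 ≤ u p)
    (hv0 : ∀ p ∈ Set.Icc (a1, b1) (a2, b2), 0 ≤ v p)
    (n : ℕ) (x y : Fin (n + 1) → ℝ) (hP : IsPartition a1 a2 b1 b2 n x y) :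
    |Jpart u n x y - Jpart v n x y| ≤
      Real.sqrt (sSup ((fun p => |u p - v p|) '' Set.Icc (a1, b1) (a2, b2))) *
        (a2 - a1 + b2 - b1) :=
  Jpart_continuity_general a1 a2 b1 b2 u v hu hv n x y hP
end
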